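/- arXiv:2510.03440 — 9 statements merged into one kernel-verified Lean document; each statement's English description precedes it below -/
import Mathlib

section
/- Let λ : A → B be a ring homomorphism between (possibly noncommutative) unital rings. Then λ is an epimorphism in the category of rings if and only if the restriction-of-scalars functor from right B-modules to right A-modules is fully faithful. -/
/-!
If `λ` is an epimorphism and `φ : M → N` is an `A`-linear map of right `B`-modules, the shear
`u (m, n) = (m, n + φ m)` of `M × N` commutes with the action of `λ A`. Conjugation by `u` and
the identity are then two ring maps `B → End (M × N)ᵐᵒᵖ` agreeing on `A`, so they are equal: `u`
commutes with the action of `B`, i.e. `φ` is `B`-linear. Conversely, if `f g : B → C` agree on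
`A`, the identity of `C` is an `A`-linear map `C_f → C_g`; fullness makes it `B`-linear, and
evaluating at `1` gives `f = g`.
-/

open CategoryTheory

universe w v

namespace RingHom

variable {A B : Type*} [Ring A] [Ring B]

def IsEpi (lam : A →+* B) : Prop :=
  ∀ (C : Type w) [Ring C] (f g : B →+* C), f.comp lam = g.comp lam → f = g

theorem isEpi_op_iff {lam : A →+* B} : IsEpi.{w} (RingHom.op lam) ↔ IsEpi.{w} lam := by
  constructor
  · intro h C _ f g hfg
    exact RingHom.op.injective (h _ _ _ (congrArg RingHom.op hfg))
  · intro h C _ f g hfg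
    let toOp (k : Bᵐᵒᵖ →+* C) : B →+* Cᵐᵒᵖ :=
      RingHom.unop ((RingEquiv.opOp C : C →+* Cᵐᵒᵖᵐᵒᵖ).comp k)
    have hfg' : toOp f = toOp g :=
      h _ _ _ (RingHom.ext fun a => congrArg MulOpposite.op (RingHom.congr_fun hfg (.op a)))
    ext b
    exact congrArg MulOpposite.unop (RingHom.congr_fun hfg' b.unop)

theorem IsEpi.lift_universe {B : Type v} [Ring B] {lam : A →+* B} (h : IsEpi.{v} lam) :
    IsEpi.{w} lam := by
  intro C _ f g hfg
  -- `f` and `g` take values in the image of the free ring on `B ⊕ B`, a ring of universe `v`.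
  let R := (FreeRing.lift (Sum.elim f g)).range
  have hf (b : B) : f b ∈ R := ⟨FreeRing.of (Sum.inl b), by simp⟩
  have hg (b : B) : g b ∈ R := ⟨FreeRing.of (Sum.inr b), by simp⟩
  have : Small.{v} R :=
    small_of_surjective (FreeRing.lift (Sum.elim f g)).rangeRestrict_surjective
  let e : R ≃+* Shrink.{v} R := (Shrink.ringEquiv R).symm
  have hfg' : (e : R →+* Shrink.{v} R).comp (f.codRestrict R hf) =
      (e : R →+* Shrink.{v} R).comp (g.codRestrict R hg) :=
    h _ _ _ (RingHom.ext fun a => congrArg e (Subtype.ext (RingHom.congr_fun hfg a) :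
      f.codRestrict R hf (lam a) = g.codRestrict R hg (lam a)))
  ext b
  exact congrArg Subtype.val (e.injective (RingHom.congr_fun hfg' b))

theorem IsEpi.commute {lam : A →+* B} (h : IsEpi.{w} lam) {C : Type w} [Ring C] (ρ : B →+* C)
    (u : Cˣ) (hu : ∀ a, Commute (ρ (lam a)) u) (b : B) : Commute (ρ b) u := by
  let conj := MulSemiringAction.toRingHom (ConjAct Cˣ) C (ConjAct.toConjAct u)
  have conj_eq_self_iff (x : C) : conj x = x ↔ Commute x u := by
    rw [MulSemiringAction.toRingHom_apply, ConjAct.units_smul_def, ConjAct.ofConjAct_toConjAct,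
      Units.mul_inv_eq_iff_eq_mul]
    exact eq_comm
  have hconj : ρ = conj.comp ρ :=
    h C _ _ (RingHom.ext fun a => ((conj_eq_self_iff _).2 (hu a)).symm)
  exact (conj_eq_self_iff _).1 (RingHom.congr_fun hconj b).symm

end RingHom

namespace AddMonoidHom

variable {M N : Type*} [AddCommGroup M] [AddCommGroup N]

def shear (φ : M →+ N) : (AddMonoid.End (M × N))ˣ where
  val := (fst M N).prod (snd M N + φ.comp (fst M N))
  inv := (fst M N).prod (snd M N - φ.comp (fst M N))
  val_inv := ext fun p => Prod.ext rfl (sub_add_cancel p.2 (φ p.1))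
  inv_val := ext fun p => Prod.ext rfl (add_sub_cancel_right p.2 (φ p.1))

theorem commute_toAddMonoidEnd_shear_iff {R : Type*} [Semiring R] [Module R M] [Module R N]
    (φ : M →+ N) (r : R) :
    Commute (Module.toAddMonoidEnd R (M × N) r) (shear φ) ↔ ∀ m, φ (r • m) = r • φ m := by
  constructor
  · intro h m
    have : r • (0 + φ m) = r • (0 : N) + φ (r • m) :=
      congrArg Prod.snd (DFunLike.congr_fun h (m, 0))
    simpa [eq_comm] using this
  · intro h
    exact ext fun p => Prod.ext rfl
      (show r • (p.2 + φ p.1) = r • p.2 + φ (r • p.1) by rw [smul_add, h])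

end AddMonoidHom

namespace RingHom.IsEpi

variable {R S : Type*} [Ring R] [Ring S] {f : R →+* S}

theorem map_smul (hf : f.IsEpi.{w}) {M N : Type w} [AddCommGroup M] [AddCommGroup N]
    [Module S M] [Module S N] (φ : M →+ N) (hφ : ∀ r m, φ (f r • m) = f r • φ m)
    (s : S) (m : M) : φ (s • m) = s • φ m :=
  (φ.commute_toAddMonoidEnd_shear_iff s).1
    (hf.commute _ _ (fun r => (φ.commute_toAddMonoidEnd_shear_iff _).2 (hφ r)) s) m

theorem full_restrictScalars (hf : f.IsEpi.{v}) : (ModuleCat.restrictScalars.{v} f).Full where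
  map_surjective φ :=
    ⟨ModuleCat.ofHom { φ.hom.toAddMonoidHom with
      map_smul' := hf.map_smul φ.hom.toAddMonoidHom φ.hom.map_smul }, rfl⟩

theorem of_full_restrictScalars [(ModuleCat.restrictScalars.{max v w} f).Full] :
    f.IsEpi.{w} := by
  intro C _ g h hgh
  let X := ModuleCat.of C (ULift.{v} C)
  let Xg := (ModuleCat.restrictScalars f).obj ((ModuleCat.restrictScalars g).obj X)
  let Xh := (ModuleCat.restrictScalars f).obj ((ModuleCat.restrictScalars h).obj X)
  let φ : Xg ⟶ Xh := ModuleCat.ofHom (X := Xg) (Y := Xh)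
    { toFun := fun x => x
      map_add' := fun _ _ => rfl
      map_smul' := fun r (x : ULift.{v} C) => show g (f r) • x = h (f r) • x from
        congrArg (· • x) (RingHom.congr_fun hgh r) }
  obtain ⟨ψ, hψ⟩ := Functor.map_surjective _ φ
  have hψ_id (x : ULift.{v} C) : ψ.hom x = x := congrArg (fun k => k.hom x) hψ
  ext s
  have key : ULift.up (g s * 1) = ULift.up (h s * 1) :=
    (hψ_id _).symm.trans ((ψ.hom.map_smul s (ULift.up 1)).trans (congrArg (s • ·) (hψ_id _)))
  simpa using key

end RingHom.IsEpi

/-- A ring homomorphism `λ : A → B` between (possibly noncommutative) unital rings is an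
epimorphism in the category of rings if and only if restriction of scalars from right
`B`-modules (i.e. left `Bᵐᵒᵖ`-modules) to right `A`-modules is fully faithful. -/
theorem statement0 {A B : Type} [Ring A] [Ring B] (lam : A →+* B) :
    (∀ (C : Type) [Ring C] (f g : B →+* C), f.comp lam = g.comp lam → f = g) ↔
      ((ModuleCat.restrictScalars (RingHom.op lam)).Full ∧
        (ModuleCat.restrictScalars (RingHom.op lam)).Faithful) := by
  change lam.IsEpi ↔ _
  constructor
  · intro h
    exact ⟨(RingHom.isEpi_op_iff.2 h.lift_universe).full_restrictScalars, inferInstance⟩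
  · rintro ⟨_, -⟩
    exact RingHom.isEpi_op_iff.1 RingHom.IsEpi.of_full_restrictScalars
end

section
/- If λ : A → B is an epimorphism in the category of commutative rings, then the induced map Spec B → Spec A on prime spectra (sending a prime q to its preimage λ⁻¹(q)) is injective. -/
/-!
If primes `q₁, q₂` of `B` contract to the same prime `p` of `A`, then both residue fields
`κ(q₁), κ(q₂)` are extensions of `κ(p)`, and `B` maps to the nonzero ring `κ(q₁) ⊗[κ(p)] κ(q₂)`
through either factor. The two maps agree on `A`, so they coincide when `A → B` is an epimorphism;
as each factor embeds into the tensor product, their kernels are `q₁` and `q₂`.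
-/

open TensorProduct

universe u v

variable {A : Type u} {B : Type v} [CommRing A] [CommRing B]

theorem Ideal.exists_ringHom_ker_eq_of_comap_eq (f : A →+* B) (q₁ q₂ : Ideal B) [q₁.IsPrime]
    [q₂.IsPrime] (h : q₁.comap f = q₂.comap f) :
    ∃ (C : Type v) (_ : CommRing C) (g₁ g₂ : B →+* C),
      g₁.comp f = g₂.comp f ∧ RingHom.ker g₁ = q₁ ∧ RingHom.ker g₂ = q₂ := by
  set p := q₁.comap f
  let : Algebra p.ResidueField q₁.ResidueField := (ResidueField.map p q₁ f rfl).toAlgebra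
  let : Algebra p.ResidueField q₂.ResidueField := (ResidueField.map p q₂ f h).toAlgebra
  let g₁ := (Algebra.TensorProduct.includeLeft : q₁.ResidueField →ₐ[p.ResidueField]
    q₁.ResidueField ⊗[p.ResidueField] q₂.ResidueField).toRingHom.comp (algebraMap B _)
  let g₂ := (Algebra.TensorProduct.includeRight : q₂.ResidueField →ₐ[p.ResidueField]
    q₁.ResidueField ⊗[p.ResidueField] q₂.ResidueField).toRingHom.comp (algebraMap B _)
  refine ⟨_, inferInstance, g₁, g₂, ?_, ?_, ?_⟩
  · ext a
    simp only [g₁, g₂, RingHom.comp_apply, AlgHom.toRingHom_eq_coe, RingHom.coe_coe]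
    rw [← ResidueField.map_algebraMap p q₁ f rfl, ← ResidueField.map_algebraMap p q₂ f h]
    exact (Algebra.TensorProduct.includeLeft.commutes _).trans
      (Algebra.TensorProduct.includeRight.commutes _).symm
  · rw [RingHom.ker_comp_of_injective _ (RingHom.injective _), ker_algebraMap_residueField]
  · rw [RingHom.ker_comp_of_injective _ (RingHom.injective _), ker_algebraMap_residueField]

/-- If `λ : A → B` is an epimorphism in the category of commutative rings, then the induced
map `Spec B → Spec A` on prime spectra is injective. -/
theorem statement1 {A B : Type} [CommRing A] [CommRing B] (lam : A →+* B)
    (hepi : ∀ (C : Type) [CommRing C] (f g : B →+* C), f.comp lam = g.comp lam → f = g) :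
    Function.Injective (PrimeSpectrum.comap lam) := by
  intro q₁ q₂ h
  obtain ⟨C, _, g₁, g₂, hcomp, hker₁, hker₂⟩ :=
    Ideal.exists_ringHom_ker_eq_of_comap_eq lam q₁.asIdeal q₂.asIdeal congr(($h).asIdeal)
  ext : 1
  rw [← hker₁, ← hker₂, hepi C g₁ g₂ hcomp]
end

section
/- Let λ : A → B be a ring epimorphism of commutative rings such that A is a local ring with maximal ideal m, B is a flat A-module, and m lies in the image of the induced map Spec B → Spec A. Then λ is bijective (i.e. an isomorphism). -/
open TensorProduct

/-- If `A` is a commutative local ring, `λ : A → B` is a flat ring epimorphism of commutative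
rings, and the maximal ideal of `A` is in the image of `Spec B → Spec A`, then `λ` is
bijective. -/
theorem statement2 {A B : Type} [CommRing A] [IsLocalRing A] [CommRing B] [Algebra A B]
    (hepi : ∀ (C : Type) [CommRing C] (f g : B →+* C),
      f.comp (algebraMap A B) = g.comp (algebraMap A B) → f = g)
    (hflat : Module.Flat A B)
    (hmem : ∃ q : Ideal B, q.IsPrime ∧ q.comap (algebraMap A B) = IsLocalRing.maximalIdeal A) :
    Function.Bijective (algebraMap A B) := by
  obtain ⟨q, hq, hcomap⟩ := hmem
  -- B is faithfully flat over A
  have hff : Module.FaithfullyFlat A B := by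
    refine ⟨fun m hm h => ?_⟩
    have hm' : m = IsLocalRing.maximalIdeal A :=
      IsLocalRing.eq_maximalIdeal hm
    subst hm'
    have hle : (IsLocalRing.maximalIdeal A) • (⊤ : Submodule A B) ≤ q.restrictScalars A := by
      refine Submodule.smul_le.2 fun a ha b _ => ?_
      have : algebraMap A B a ∈ q := by
        rw [← hcomap] at ha; exact ha
      have : algebraMap A B a * b ∈ q := Ideal.mul_mem_right _ _ this
      simpa [Algebra.smul_def] using this
    rw [h] at hle
    exact hq.ne_top (Ideal.eq_top_iff_one _ |>.2 (hle Submodule.mem_top))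
  -- epimorphism: the two inclusions B → B ⊗[A] B agree
  have hinc : (Algebra.TensorProduct.includeLeft (R := A) (S := A) (A := B) (B := B)).toRingHom
      = (Algebra.TensorProduct.includeRight (R := A) (A := B) (B := B)).toRingHom := by
    apply hepi
    ext a
    simp [Algebra.algebraMap_eq_smul_one, TensorProduct.smul_tmul]
  have htmul : ∀ b : B, (b ⊗ₜ[A] (1 : B) : B ⊗[A] B) = (1 : B) ⊗ₜ[A] b := fun b =>
    congrFun (congrArg DFunLike.coe hinc) b
  constructor
  · -- injectivity
    set I : Submodule A A := LinearMap.ker (Algebra.linearMap A B) with hI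
    have hcomp : (TensorProduct.lid A B).toLinearMap.comp
        (LinearMap.rTensor B I.subtype) = 0 := by
      apply TensorProduct.ext'
      intro i b
      obtain ⟨i, hi⟩ := i
      have : algebraMap A B i = 0 := hi
      simp [Algebra.smul_def, this]
    have hinj : Function.Injective ((TensorProduct.lid A B).toLinearMap.comp
        (LinearMap.rTensor B I.subtype)) :=
      (TensorProduct.lid A B).injective.comp
        (hflat.rTensor_preserves_injective_linearMap I.subtype I.injective_subtype)
    have hsub : Subsingleton (I ⊗[A] B) := by
      refine subsingleton_of_forall_eq 0 fun x => hinj ?_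
      rw [hcomp]; simp
    have : Subsingleton I := Module.FaithfullyFlat.rTensor_reflects_triviality A B I
    have hbot : I = ⊥ := Submodule.eq_bot_of_subsingleton
    intro x y hxy
    have : x - y ∈ I := by
      simp only [hI, LinearMap.mem_ker, Algebra.linearMap_apply, map_sub, hxy, sub_self]
    rw [hbot] at this
    simpa [sub_eq_zero] using this
  · -- surjectivity
    set R : Submodule A B := LinearMap.range (Algebra.linearMap A B) with hR
    set π : B →ₗ[A] B ⧸ R := R.mkQ with hπ
    have hπ0 : ∀ b c : B, (LinearMap.lTensor B π) (b ⊗ₜ[A] c) = 0 := by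
      intro b c
      have h1 : (b ⊗ₜ[A] c : B ⊗[A] B) = (b * c) ⊗ₜ[A] 1 := by
        calc (b ⊗ₜ[A] c : B ⊗[A] B) = (b ⊗ₜ[A] 1) * (1 ⊗ₜ[A] c) := by
              rw [Algebra.TensorProduct.tmul_mul_tmul]; ring_nf
          _ = (b ⊗ₜ[A] 1) * (c ⊗ₜ[A] 1) := by rw [htmul c]
          _ = (b * c) ⊗ₜ[A] 1 := by rw [Algebra.TensorProduct.tmul_mul_tmul, mul_one]
      rw [h1]
      have : π (1 : B) = 0 := by
        simp only [hπ, Submodule.mkQ_apply, Submodule.Quotient.mk_eq_zero]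
        exact ⟨1, by simp⟩
      simp [LinearMap.lTensor_tmul, this]
    have hsurj : Function.Surjective (LinearMap.lTensor B π) :=
      LinearMap.lTensor_surjective B R.mkQ_surjective
    have hsub : Subsingleton (B ⊗[A] (B ⧸ R)) := by
      refine subsingleton_of_forall_eq 0 fun x => ?_
      obtain ⟨y, rfl⟩ := hsurj x
      induction y using TensorProduct.induction_on with
      | zero => simp
      | tmul b c => exact hπ0 b c
      | add u v hu hv => rw [map_add, hu, hv, add_zero]
    have : Subsingleton (B ⧸ R) := Module.FaithfullyFlat.lTensor_reflects_triviality A B (B ⧸ R)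
    have htop : R = ⊤ := Submodule.Quotient.subsingleton_iff.mp this
    intro b
    have : b ∈ R := htop ▸ Submodule.mem_top
    obtain ⟨a, ha⟩ := this
    exact ⟨a, ha⟩
end

section
/- Let λ : A → B be a ring homomorphism of commutative rings such that for every prime ideal q of B, the induced map on localizations A_{λ⁻¹(q)} → B_q makes B_q a flat A_{λ⁻¹(q)}-module. Then B is a flat A-module. -/
/-- If `λ : A → B` is a homomorphism of commutative rings such that for every prime `q` of `B`
the induced map `A_{λ⁻¹(q)} → B_q` makes `B_q` a flat `A_{λ⁻¹(q)}`-module, then `B` is a flat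
`A`-module. -/
theorem statement4 {A B : Type} [CommRing A] [CommRing B] [Algebra A B]
    (h : ∀ (q : Ideal B) [q.IsPrime],
      letI : Algebra (Localization.AtPrime (q.comap (algebraMap A B)))
          (Localization.AtPrime q) :=
        (Localization.localRingHom (q.comap (algebraMap A B)) q (algebraMap A B) rfl).toAlgebra
      Module.Flat (Localization.AtPrime (q.comap (algebraMap A B))) (Localization.AtPrime q)) :
    Module.Flat A B :=
  RingHom.flat_algebraMap_iff.mp (RingHom.Flat.ofLocalizationPrime (algebraMap A B) h)
end

section
/- Let A be a ring and Σ a set of morphisms between projective right A-modules. Then the class F_Σ = {Y a left A-module : σ ⊗_A Y is injective for all σ ∈ Σ} is closed under extensions, submodules, and arbitrary direct sums. -/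
/-!
Projective modules are flat, so `P₁ ⊗ -` and `P₀ ⊗ -` are exact and `σ ⊗ -` is a natural
transformation between them. Closure under submodules and extensions is a diagram chase in the
resulting map of short exact sequences; on a direct sum, `σ ⊗ -` acts componentwise.
-/

open LinearMap TensorProduct

section TensorNaturality

variable {R : Type*} [CommRing R] {P₁ P₀ X Y Z : Type*}
  [AddCommGroup P₁] [Module R P₁] [AddCommGroup P₀] [Module R P₀]
  [AddCommGroup X] [Module R X] [AddCommGroup Y] [Module R Y] [AddCommGroup Z] [Module R Z]

theorem LinearMap.rTensor_lTensor_apply (σ : P₁ →ₗ[R] P₀) (f : X →ₗ[R] Y) (t : P₁ ⊗[R] X) :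
    σ.rTensor Y (f.lTensor P₁ t) = f.lTensor P₀ (σ.rTensor X t) := by
  rw [← comp_apply, rTensor_comp_lTensor, ← lTensor_comp_rTensor, comp_apply]

theorem injective_rTensor_of_injective [Module.Flat R P₁] (σ : P₁ →ₗ[R] P₀) {f : X →ₗ[R] Y}
    (hf : Function.Injective f) (hY : Function.Injective (σ.rTensor Y)) :
    Function.Injective (σ.rTensor X) := by
  have hcomp : Function.Injective (f.lTensor P₀ ∘ σ.rTensor X) := by
    rw [← coe_comp, lTensor_comp_rTensor, ← rTensor_comp_lTensor, coe_comp]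
    exact hY.comp (Module.Flat.lTensor_preserves_injective_linearMap f hf)
  exact hcomp.of_comp

theorem injective_rTensor_of_exact [Module.Flat R P₀] (σ : P₁ →ₗ[R] P₀) {f : X →ₗ[R] Y}
    {g : Y →ₗ[R] Z} (hf : Function.Injective f) (hg : Function.Surjective g)
    (hfg : Function.Exact f g) (hX : Function.Injective (σ.rTensor X))
    (hZ : Function.Injective (σ.rTensor Z)) :
    Function.Injective (σ.rTensor Y) := by
  refine (injective_iff_map_eq_zero _).mpr fun y hy ↦ ?_
  have hgy : g.lTensor P₁ y = 0 :=
    hZ <| by rw [rTensor_lTensor_apply, hy, map_zero, map_zero]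
  obtain ⟨x, rfl⟩ := (lTensor_exact P₁ hfg hg y).mp hgy
  have hσx : σ.rTensor X x = 0 :=
    Module.Flat.lTensor_preserves_injective_linearMap f hf <| by
      rw [← rTensor_lTensor_apply, hy, map_zero]
  have hx : x = 0 := hX (by rw [hσx, map_zero])
  rw [hx, map_zero]

theorem injective_rTensor_directSum_iff (σ : P₁ →ₗ[R] P₀) {J : Type*} [DecidableEq J]
    (M : J → Type*) [∀ j, AddCommGroup (M j)] [∀ j, Module R (M j)] :
    Function.Injective (σ.rTensor (DirectSum J M)) ↔ ∀ j, Function.Injective (σ.rTensor (M j)) := by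
  rw [← EquivLike.comp_injective _ (directSumRight R R P₀ M), ← LinearEquiv.coe_coe, ← coe_comp,
    directSumRight_comp_rTensor, coe_comp, LinearEquiv.coe_coe, EquivLike.injective_comp,
    DirectSum.lmap_injective]

end TensorNaturality

section
variable (A : Type) [CommRing A] {ι : Type} (P₁ P₀ : ι → Type)
  [∀ i, AddCommGroup (P₁ i)] [∀ i, Module A (P₁ i)]
  [∀ i, AddCommGroup (P₀ i)] [∀ i, Module A (P₀ i)]
  (σ : ∀ i, P₁ i →ₗ[A] P₀ i)

/-- `Y` is `Σ`-torsion-free: `σᵢ ⊗_A Y` is injective for every `i`. -/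
def IsTorsionFreeFor (Y : Type*) [AddCommGroup Y] [Module A Y] : Prop :=
  ∀ i, Function.Injective (LinearMap.rTensor Y (σ i))

/-- For a set `Σ` of morphisms between projective `A`-modules, the class `F_Σ` of
`Σ`-torsion-free modules is closed under extensions, submodules and arbitrary direct sums. -/
theorem statement10
    (hproj₁ : ∀ i, Module.Projective A (P₁ i)) (hproj₀ : ∀ i, Module.Projective A (P₀ i)) :
    -- closed under extensions
    (∀ (X Y Z : Type) [AddCommGroup X] [Module A X] [AddCommGroup Y] [Module A Y]
        [AddCommGroup Z] [Module A Z] (f : X →ₗ[A] Y) (g : Y →ₗ[A] Z),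
      Function.Injective f → Function.Surjective g → LinearMap.ker g = LinearMap.range f →
      IsTorsionFreeFor A P₁ P₀ σ X → IsTorsionFreeFor A P₁ P₀ σ Z →
        IsTorsionFreeFor A P₁ P₀ σ Y) ∧
    -- closed under submodules
    (∀ (X Y : Type) [AddCommGroup X] [Module A X] [AddCommGroup Y] [Module A Y]
        (f : X →ₗ[A] Y), Function.Injective f →
      IsTorsionFreeFor A P₁ P₀ σ Y → IsTorsionFreeFor A P₁ P₀ σ X) ∧
    -- closed under arbitrary direct sums
    (∀ (J : Type) [DecidableEq J] (X : J → Type) [∀ j, AddCommGroup (X j)]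
        [∀ j, Module A (X j)],
      (∀ j, IsTorsionFreeFor A P₁ P₀ σ (X j)) → IsTorsionFreeFor A P₁ P₀ σ (DirectSum J X)) := by
  refine ⟨?_, ?_, ?_⟩
  · intro X Y Z _ _ _ _ _ _ f g hf hg hfg hX hZ i
    have := hproj₀ i
    exact injective_rTensor_of_exact (σ i) hf hg (exact_iff.mpr hfg) (hX i) (hZ i)
  · intro X Y _ _ _ _ f hf hY i
    have := hproj₁ i
    exact injective_rTensor_of_injective (σ i) hf (hY i)
  · intro J _ X _ _ hX i
    exact (injective_rTensor_directSum_iff (σ i) X).mpr fun j ↦ hX j i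

end
end

section
/- Let A be a ring and S a set of right A-modules each of projective dimension at most one. Then the class S^{⊥₀,₁} = {X : Hom_A(M, X) = 0 = Ext¹_A(M, X) for all M ∈ S} is closed under kernels, cokernels, extensions, and arbitrary products in the category of right A-modules. -/
section
variable (A : Type) [Ring A]

/-- Every short exact sequence `0 → X → E → M → 0` splits, i.e. `Ext¹_A(M, X) = 0`. -/
def Ext1Vanishes (M X : Type) [AddCommGroup M] [Module A M] [AddCommGroup X] [Module A X] :
    Prop :=
  ∀ (E : Type) [AddCommGroup E] [Module A E] (i : X →ₗ[A] E) (p : E →ₗ[A] M),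
    Function.Injective i → Function.Surjective p → LinearMap.ker p = LinearMap.range i →
    ∃ s : M →ₗ[A] E, p ∘ₗ s = LinearMap.id

/-- `M` has projective dimension at most one: the kernel of any surjection from a
projective module onto `M` is projective. -/
def PdLeOne (M : Type) [AddCommGroup M] [Module A M] : Prop :=
  ∀ (Q : Type) [AddCommGroup Q] [Module A Q], Module.Projective A Q →
    ∀ p : Q →ₗ[A] M, Function.Surjective p → Module.Projective A (LinearMap.ker p)

variable {ι : Type} (M : ι → Type) [∀ i, AddCommGroup (M i)] [∀ i, Module A (M i)]

/-- `X ∈ S^{⊥₀,₁}`: both `Hom_A(Mᵢ, X)` and `Ext¹_A(Mᵢ, X)` vanish for all `i`. -/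
def InPerp (X : Type) [AddCommGroup X] [Module A X] : Prop :=
  ∀ i, (∀ f : M i →ₗ[A] X, f = 0) ∧ Ext1Vanishes A (M i) X



-- factoring a map killing the kernel through a surjection
theorem factor_surj {P N X : Type} [AddCommGroup P] [Module A P] [AddCommGroup N] [Module A N]
    [AddCommGroup X] [Module A X] (q : P →ₗ[A] N) (hq : Function.Surjective q)
    (h : P →ₗ[A] X) (hle : LinearMap.ker q ≤ LinearMap.ker h) :
    ∃ m : N →ₗ[A] X, m ∘ₗ q = h := by
  let e := LinearMap.quotKerEquivOfSurjective q hq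
  refine ⟨(LinearMap.ker q).liftQ h hle ∘ₗ (e.symm : N →ₗ[A] P ⧸ LinearMap.ker q), ?_⟩
  ext x
  have he : e (Submodule.Quotient.mk x) = q x := by
    simp [e, LinearMap.quotKerEquivOfSurjective, LinearMap.quotKerEquivRange]
  have : e.symm (q x) = Submodule.Quotient.mk x := by
    rw [← he]; exact e.symm_apply_apply _
  simp [this]


section
variable (A : Type) [Ring A]

variable {P1 P0 : Type} [AddCommGroup P1] [Module A P1] [AddCommGroup P0] [Module A P0]
variable (j : P1 →ₗ[A] P0)

theorem rbij_ker {X Y : Type} [AddCommGroup X] [Module A X] [AddCommGroup Y] [Module A Y]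
    (f : X →ₗ[A] Y)
    (hX : Function.Bijective fun h : P0 →ₗ[A] X => h ∘ₗ j)
    (hY : Function.Bijective fun h : P0 →ₗ[A] Y => h ∘ₗ j) :
    Function.Bijective fun h : P0 →ₗ[A] (LinearMap.ker f) => h ∘ₗ j := by
  constructor
  · intro h₁ h₂ he
    have he' : h₁ ∘ₗ j = h₂ ∘ₗ j := he
    have hsub : (LinearMap.ker f).subtype ∘ₗ h₁ = (LinearMap.ker f).subtype ∘ₗ h₂ := by
      apply hX.1
      simp only [LinearMap.comp_assoc]
      rw [he']
    ext x
    exact congrFun (congrArg DFunLike.coe hsub) x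
  · intro g
    obtain ⟨h, hh⟩ := hX.2 ((LinearMap.ker f).subtype ∘ₗ g)
    simp only at hh
    have hfh : f ∘ₗ h = 0 := by
      apply hY.1
      simp only [LinearMap.comp_assoc, hh]
      ext a
      simp [(g a).2]
    refine ⟨LinearMap.codRestrict (LinearMap.ker f) h (fun x => by
      simpa using congrFun (congrArg DFunLike.coe hfh) x), ?_⟩
    ext a
    have := congrFun (congrArg DFunLike.coe hh) a
    simpa using this

theorem rbij_coker {X Y : Type} [AddCommGroup X] [Module A X] [AddCommGroup Y] [Module A Y]
    [Module.Projective A P0] [Module.Projective A P1]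
    (f : X →ₗ[A] Y)
    (hX : Function.Bijective fun h : P0 →ₗ[A] X => h ∘ₗ j)
    (hY : Function.Bijective fun h : P0 →ₗ[A] Y => h ∘ₗ j) :
    Function.Bijective fun h : P0 →ₗ[A] (Y ⧸ LinearMap.range f) => h ∘ₗ j := by
  set R := LinearMap.range f
  constructor
  · intro h₁ h₂ he
    -- reduce to h with h ∘ j = 0 implies h = 0
    suffices key : ∀ h : P0 →ₗ[A] (Y ⧸ R), h ∘ₗ j = 0 → h = 0 by
      have he' : h₁ ∘ₗ j = h₂ ∘ₗ j := he
      have := key (h₁ - h₂) (by rw [LinearMap.sub_comp, he', sub_self])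
      exact sub_eq_zero.mp this
    intro h hj0
    obtain ⟨ht, hht⟩ := Module.projective_lifting_property R.mkQ h R.mkQ_surjective
    have hmem : ∀ a : P1, ht (j a) ∈ R := by
      intro a
      have : R.mkQ (ht (j a)) = 0 := by
        have := congrFun (congrArg DFunLike.coe hht) (j a)
        simp only [LinearMap.comp_apply] at this
        rw [this]
        exact congrFun (congrArg DFunLike.coe hj0) a
      simpa [← LinearMap.mem_ker, Submodule.ker_mkQ] using this
    obtain ⟨v, hv⟩ := Module.projective_lifting_property f.rangeRestrict
      (LinearMap.codRestrict R (ht ∘ₗ j) hmem) f.surjective_rangeRestrict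
    obtain ⟨w, hw⟩ := hX.2 v
    simp only at hw
    have hyw : ht = f ∘ₗ w := by
      apply hY.1
      simp only [LinearMap.comp_assoc, hw]
      ext a
      have := congrFun (congrArg DFunLike.coe hv) a
      have h2 : f (v a) = ht (j a) := congrArg Subtype.val this
      simpa using h2.symm
    rw [← hht, hyw]
    ext x
    simp [Submodule.Quotient.mk_eq_zero, R]
  · intro g
    obtain ⟨gt, hgt⟩ := Module.projective_lifting_property R.mkQ g R.mkQ_surjective
    obtain ⟨ht, hht⟩ := hY.2 gt
    simp only at hht
    exact ⟨R.mkQ ∘ₗ ht, by simp only [LinearMap.comp_assoc, hht, hgt]⟩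



theorem rbij_ext {X Y Z : Type} [AddCommGroup X] [Module A X] [AddCommGroup Y] [Module A Y]
    [AddCommGroup Z] [Module A Z] [Module.Projective A P0]
    (f : X →ₗ[A] Y) (g : Y →ₗ[A] Z) (hf : Function.Injective f) (hg : Function.Surjective g)
    (hk : LinearMap.ker g = LinearMap.range f)
    (hX : Function.Bijective fun h : P0 →ₗ[A] X => h ∘ₗ j)
    (hZ : Function.Bijective fun h : P0 →ₗ[A] Z => h ∘ₗ j) :
    Function.Bijective fun h : P0 →ₗ[A] Y => h ∘ₗ j := by
  have hinv : ∀ z : LinearMap.range f,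
      f ((LinearEquiv.ofInjective f hf).symm z) = (z : Y) := by
    intro z
    exact LinearEquiv.ofInjective_symm_apply (f := f) (h := hf) z
  constructor
  · intro h₁ h₂ he
    have he' : h₁ ∘ₗ j = h₂ ∘ₗ j := he
    suffices key : ∀ h : P0 →ₗ[A] Y, h ∘ₗ j = 0 → h = 0 by
      have := key (h₁ - h₂) (by rw [LinearMap.sub_comp, he', sub_self])
      exact sub_eq_zero.mp this
    intro h hj0
    have hgh : g ∘ₗ h = 0 := by
      apply hZ.1
      show (g ∘ₗ h) ∘ₗ j = (0 : P0 →ₗ[A] Z) ∘ₗ j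
      rw [LinearMap.comp_assoc, hj0]
      ext a; simp
    have hmem : ∀ x : P0, h x ∈ LinearMap.range f := by
      intro x
      rw [← hk, LinearMap.mem_ker]
      exact congrFun (congrArg DFunLike.coe hgh) x
    set u : P0 →ₗ[A] X :=
      ((LinearEquiv.ofInjective f hf).symm : LinearMap.range f →ₗ[A] X) ∘ₗ
        LinearMap.codRestrict (LinearMap.range f) h hmem with hu
    have hfu : ∀ x, f (u x) = h x := fun x => hinv _
    have hu0 : u = 0 := by
      apply hX.1
      show u ∘ₗ j = (0 : P0 →ₗ[A] X) ∘ₗ j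
      ext a
      apply hf
      simp only [LinearMap.comp_apply, LinearMap.zero_apply, hfu, map_zero]
      exact congrFun (congrArg DFunLike.coe hj0) a
    ext x
    rw [← hfu x, congrFun (congrArg DFunLike.coe hu0) x]
    simp
  · intro v
    obtain ⟨w, hw⟩ := hZ.2 (g ∘ₗ v)
    simp only at hw
    obtain ⟨wt, hwt⟩ := Module.projective_lifting_property g w hg
    have hmem : ∀ a : P1, (v - wt ∘ₗ j) a ∈ LinearMap.range f := by
      intro a
      rw [← hk, LinearMap.mem_ker]
      have h1 : g (wt (j a)) = w (j a) := congrFun (congrArg DFunLike.coe hwt) (j a)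
      have h2 : w (j a) = g (v a) := congrFun (congrArg DFunLike.coe hw) a
      simp [h1, h2]
    set u : P1 →ₗ[A] X :=
      ((LinearEquiv.ofInjective f hf).symm : LinearMap.range f →ₗ[A] X) ∘ₗ
        LinearMap.codRestrict (LinearMap.range f) (v - wt ∘ₗ j) hmem with hu
    have hfu : ∀ a, f (u a) = v a - wt (j a) := fun a => hinv _
    obtain ⟨u', hu'⟩ := hX.2 u
    simp only at hu'
    refine ⟨wt + f ∘ₗ u', ?_⟩
    ext a
    have : u' (j a) = u a := congrFun (congrArg DFunLike.coe hu') a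
    simp [LinearMap.add_comp, LinearMap.comp_apply, this, hfu a]

theorem rbij_pi (J : Type) (X : J → Type) [∀ k, AddCommGroup (X k)] [∀ k, Module A (X k)]
    (hX : ∀ k, Function.Bijective fun h : P0 →ₗ[A] X k => h ∘ₗ j) :
    Function.Bijective fun h : P0 →ₗ[A] (∀ k, X k) => h ∘ₗ j := by
  constructor
  · intro h₁ h₂ he
    have he' : h₁ ∘ₗ j = h₂ ∘ₗ j := he
    ext x k
    have : (LinearMap.proj k ∘ₗ h₁ : P0 →ₗ[A] X k) = LinearMap.proj k ∘ₗ h₂ := by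
      apply (hX k).1
      show (LinearMap.proj k ∘ₗ h₁) ∘ₗ j = (LinearMap.proj k ∘ₗ h₂) ∘ₗ j
      rw [LinearMap.comp_assoc, LinearMap.comp_assoc, he']
    exact congrFun (congrArg DFunLike.coe this) x
  · intro g
    choose h hh using fun k => (hX k).2 ((LinearMap.proj k : (∀ k, X k) →ₗ[A] X k) ∘ₗ g)
    refine ⟨LinearMap.pi h, ?_⟩
    ext a k
    have := congrFun (congrArg DFunLike.coe (hh k)) a
    simpa using this

theorem perp_of_rbij {P0 M X : Type} [AddCommGroup P0] [Module A P0] [AddCommGroup M]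
    [Module A M] [AddCommGroup X] [Module A X] [Module.Projective A P0]
    (q : P0 →ₗ[A] M) (hq : Function.Surjective q)
    (hbij : Function.Bijective fun h : P0 →ₗ[A] X => h ∘ₗ (LinearMap.ker q).subtype) :
    (∀ f : M →ₗ[A] X, f = 0) ∧ Ext1Vanishes A M X := by
  set j := (LinearMap.ker q).subtype with hjdef
  constructor
  · intro f
    have h1 : (f ∘ₗ q) ∘ₗ j = (0 : P0 →ₗ[A] X) ∘ₗ j := by
      ext a
      simp [j, LinearMap.mem_ker.mp a.2]
    have h2 : f ∘ₗ q = 0 := hbij.1 h1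
    ext m
    obtain ⟨b, rfl⟩ := hq m
    exact congrFun (congrArg DFunLike.coe h2) b
  · intro E _ _ i p hi hp hker
    obtain ⟨l, hl⟩ := Module.projective_lifting_property p q hp
    have hmem : ∀ a : ↥(LinearMap.ker q), l (j a) ∈ LinearMap.range i := by
      intro a
      rw [← hker, LinearMap.mem_ker]
      have : p (l (j a)) = q (j a) := congrFun (congrArg DFunLike.coe hl) (j a)
      rw [this]
      exact LinearMap.mem_ker.mp a.2
    set g : ↥(LinearMap.ker q) →ₗ[A] X :=
      ((LinearEquiv.ofInjective i hi).symm : LinearMap.range i →ₗ[A] X) ∘ₗ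
        LinearMap.codRestrict (LinearMap.range i) (l ∘ₗ j) hmem with hg
    have hig : ∀ a, i (g a) = l (j a) := fun a =>
      LinearEquiv.ofInjective_symm_apply (f := i) (h := hi) _
    obtain ⟨h, hh⟩ := hbij.2 g
    simp only at hh
    have hle : LinearMap.ker q ≤ LinearMap.ker (l - i ∘ₗ h) := by
      intro x hx
      have hx1 : l x - i (h x) = 0 := by
        have e1 : h x = g ⟨x, hx⟩ := congrFun (congrArg DFunLike.coe hh) ⟨x, hx⟩
        have e2 : i (g ⟨x, hx⟩) = l x := hig ⟨x, hx⟩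
        rw [e1, e2, sub_self]
      simpa [LinearMap.mem_ker] using hx1
    obtain ⟨s, hs⟩ := factor_surj A q hq (l - i ∘ₗ h) hle
    refine ⟨s, ?_⟩
    ext m
    obtain ⟨b, rfl⟩ := hq m
    have e1 : s (q b) = l b - i (h b) := congrFun (congrArg DFunLike.coe hs) b
    have e2 : p (l b) = q b := congrFun (congrArg DFunLike.coe hl) b
    have e3 : p (i (h b)) = 0 := by
      have : i (h b) ∈ LinearMap.ker p := by
        rw [hker]; exact LinearMap.mem_range_self i (h b)
      exact LinearMap.mem_ker.mp this
    simp [e1, e2, e3]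

theorem rbij_of_perp {P0 M X : Type} [AddCommGroup P0] [Module A P0] [AddCommGroup M]
    [Module A M] [AddCommGroup X] [Module A X]
    (q : P0 →ₗ[A] M) (hq : Function.Surjective q)
    (hperp : (∀ f : M →ₗ[A] X, f = 0) ∧ Ext1Vanishes A M X) :
    Function.Bijective fun h : P0 →ₗ[A] X => h ∘ₗ (LinearMap.ker q).subtype := by
  set j := (LinearMap.ker q).subtype with hjdef
  constructor
  · intro h₁ h₂ he
    have he' : h₁ ∘ₗ j = h₂ ∘ₗ j := he
    suffices key : ∀ h : P0 →ₗ[A] X, h ∘ₗ j = 0 → h = 0 by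
      have := key (h₁ - h₂) (by rw [LinearMap.sub_comp, he', sub_self])
      exact sub_eq_zero.mp this
    intro h hj0
    have hle : LinearMap.ker q ≤ LinearMap.ker h := by
      intro x hx
      have : h (j ⟨x, hx⟩) = 0 := congrFun (congrArg DFunLike.coe hj0) ⟨x, hx⟩
      exact LinearMap.mem_ker.mpr this
    obtain ⟨m, hm⟩ := factor_surj A q hq h hle
    rw [← hm, hperp.1 m]
    ext x; simp
  · intro g
    set d : ↥(LinearMap.ker q) →ₗ[A] P0 × X := LinearMap.prod j (-g) with hd
    set D := LinearMap.range d with hD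
    set jX : X →ₗ[A] (P0 × X) ⧸ D := D.mkQ ∘ₗ LinearMap.inr A P0 X with hjX
    have hle : D ≤ LinearMap.ker (q ∘ₗ LinearMap.fst A P0 X) := by
      rintro _ ⟨a, rfl⟩
      simp [d, j, LinearMap.mem_ker.mp a.2]
    set p' : ((P0 × X) ⧸ D) →ₗ[A] M := D.liftQ (q ∘ₗ LinearMap.fst A P0 X) hle with hp'
    have hp'mk : ∀ b x, p' (Submodule.Quotient.mk (b, x)) = q b := by
      intro b x; simp [p']
    have hjXinj : Function.Injective jX := by
      rw [← LinearMap.ker_eq_bot, LinearMap.ker_eq_bot']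
      intro x hx
      have hx' : Submodule.Quotient.mk ((0 : P0), x) = (0 : (P0 × X) ⧸ D) := hx
      rw [Submodule.Quotient.mk_eq_zero] at hx'
      obtain ⟨a, ha⟩ := hx'
      have ha1 : (j a : P0) = 0 := congrArg Prod.fst ha
      have ha2 : -g a = x := congrArg Prod.snd ha
      have ha0 : a = 0 := Subtype.ext ha1
      rw [← ha2, ha0, map_zero, neg_zero]
    have hp'surj : Function.Surjective p' := by
      intro m
      obtain ⟨b, rfl⟩ := hq m
      exact ⟨Submodule.Quotient.mk (b, 0), hp'mk b 0⟩
    have hkerp' : LinearMap.ker p' = LinearMap.range jX := by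
      apply le_antisymm
      · rintro e he
        obtain ⟨⟨b, x⟩, rfl⟩ := D.mkQ_surjective e
        rw [LinearMap.mem_ker, Submodule.mkQ_apply, hp'mk] at he
        refine ⟨x + g ⟨b, he⟩, ?_⟩
        have : jX (x + g ⟨b, he⟩) = Submodule.Quotient.mk ((0 : P0), x + g ⟨b, he⟩) := rfl
        rw [this, Submodule.mkQ_apply, Submodule.Quotient.eq]
        refine ⟨-⟨b, he⟩, ?_⟩
        have : d (-(⟨b, he⟩ : ↥(LinearMap.ker q))) = -(d ⟨b, he⟩) := map_neg d _
        rw [this]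
        have hda : d ⟨b, he⟩ = ((b : P0), -g ⟨b, he⟩) := by
          simp [d, j]
        rw [hda]
        refine Prod.ext ?_ ?_ <;> simp
      · rintro _ ⟨x, rfl⟩
        rw [LinearMap.mem_ker]
        have : jX x = Submodule.Quotient.mk ((0 : P0), x) := rfl
        rw [this, hp'mk 0 x, map_zero]
    obtain ⟨s, hs⟩ := hperp.2 ((P0 × X) ⧸ D) jX p' hjXinj hp'surj hkerp'
    have hps : ∀ m, p' (s m) = m := fun m => congrFun (congrArg DFunLike.coe hs) m
    have hmem2 : ∀ e : (P0 × X) ⧸ D, e - s (p' e) ∈ LinearMap.ker p' := by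
      intro e
      rw [LinearMap.mem_ker, map_sub, hps, sub_self]
    have hjXmem : ∀ x, jX x ∈ LinearMap.ker p' := by
      intro x
      rw [hkerp']
      exact LinearMap.mem_range_self jX x
    set jX' : X →ₗ[A] ↥(LinearMap.ker p') := LinearMap.codRestrict _ jX hjXmem with hjX'
    have hbij2 : Function.Bijective jX' := by
      constructor
      · intro x₁ x₂ hx
        exact hjXinj (congrArg Subtype.val hx)
      · rintro ⟨z, hz⟩
        rw [hkerp'] at hz
        obtain ⟨x, rfl⟩ := hz
        exact ⟨x, rfl⟩
    set eK := LinearEquiv.ofBijective jX' hbij2 with heK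
    set π : ((P0 × X) ⧸ D) →ₗ[A] X :=
      (eK.symm : ↥(LinearMap.ker p') →ₗ[A] X) ∘ₗ
        LinearMap.codRestrict _ (LinearMap.id - s ∘ₗ p') hmem2 with hπ
    have hπjX : ∀ x, π (jX x) = x := by
      intro x
      have h0 : p' (jX x) = 0 := LinearMap.mem_ker.mp (hjXmem x)
      have hval : (LinearMap.codRestrict _ (LinearMap.id - s ∘ₗ p') hmem2) (jX x) = jX' x := by
        apply Subtype.ext
        simp [h0, jX']
      have : π (jX x) = eK.symm (jX' x) := by
        rw [hπ, LinearMap.comp_apply, hval]; rfl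
      rw [this, show jX' x = eK x from rfl, eK.symm_apply_apply]
    refine ⟨π ∘ₗ (D.mkQ ∘ₗ LinearMap.inl A P0 X), ?_⟩
    ext a
    have hmkeq : D.mkQ (LinearMap.inl A P0 X (j a)) = jX (g a) := by
      have h1 : D.mkQ (LinearMap.inl A P0 X (j a)) = Submodule.Quotient.mk ((j a : P0), (0 : X)) := rfl
      have h2 : jX (g a) = Submodule.Quotient.mk ((0 : P0), g a) := rfl
      rw [h1, h2, Submodule.Quotient.eq]
      exact ⟨a, by simp [d, j]⟩
    simp only [LinearMap.comp_apply]
    rw [hmkeq, hπjX]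


end

/-- For a set `S` of right `A`-modules of projective dimension at most one, the
perpendicular class `S^{⊥₀,₁}` is closed under kernels, cokernels, extensions and
arbitrary products; in particular it is a wide subcategory. -/
theorem statement11 (hpd : ∀ i, PdLeOne A (M i)) :
    -- closed under kernels
    (∀ (X Y : Type) [AddCommGroup X] [Module A X] [AddCommGroup Y] [Module A Y]
        (f : X →ₗ[A] Y), InPerp A M X → InPerp A M Y → InPerp A M (LinearMap.ker f)) ∧
    -- closed under cokernels
    (∀ (X Y : Type) [AddCommGroup X] [Module A X] [AddCommGroup Y] [Module A Y]
        (f : X →ₗ[A] Y), InPerp A M X → InPerp A M Y →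
        InPerp A M (Y ⧸ LinearMap.range f)) ∧
    -- closed under extensions
    (∀ (X Y Z : Type) [AddCommGroup X] [Module A X] [AddCommGroup Y] [Module A Y]
        [AddCommGroup Z] [Module A Z] (f : X →ₗ[A] Y) (g : Y →ₗ[A] Z),
      Function.Injective f → Function.Surjective g → LinearMap.ker g = LinearMap.range f →
      InPerp A M X → InPerp A M Z → InPerp A M Y) ∧
    -- closed under arbitrary products
    (∀ (J : Type) (X : J → Type) [∀ j, AddCommGroup (X j)] [∀ j, Module A (X j)],
      (∀ j, InPerp A M (X j)) → InPerp A M (∀ j, X j)) := by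
  classical
  set q : ∀ i, (M i →₀ A) →ₗ[A] M i :=
    fun i => Finsupp.linearCombination A (id : M i → M i) with hqdef
  have hq : ∀ i, Function.Surjective (q i) :=
    fun i => Finsupp.linearCombination_id_surjective A (M i)
  have hP1 : ∀ i, Module.Projective A ↥(LinearMap.ker (q i)) :=
    fun i => hpd i ((M i) →₀ A) inferInstance (q i) (hq i)
  have key : ∀ (X : Type) [AddCommGroup X] [Module A X], (InPerp A M X ↔
      ∀ i, Function.Bijective
        fun h : (M i →₀ A) →ₗ[A] X => h ∘ₗ (LinearMap.ker (q i)).subtype) := by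
    intro X _ _
    constructor
    · intro hX i
      exact rbij_of_perp A (q i) (hq i) (hX i)
    · intro hX i
      exact perp_of_rbij A (q i) (hq i) (hX i)
  refine ⟨?_, ?_, ?_, ?_⟩
  · intro X Y _ _ _ _ f hX hY
    rw [key] at hX hY ⊢
    intro i
    exact rbij_ker A (P1 := ↥(LinearMap.ker (q i))) (P0 := (M i →₀ A)) ((LinearMap.ker (q i)).subtype) f (hX i) (hY i)
  · intro X Y _ _ _ _ f hX hY
    rw [key] at hX hY ⊢
    intro i
    letI := hP1 i
    exact rbij_coker A (P1 := ↥(LinearMap.ker (q i))) (P0 := (M i →₀ A)) ((LinearMap.ker (q i)).subtype) f (hX i) (hY i)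
  · intro X Y Z _ _ _ _ _ _ f g hf hg hk hX hZ
    rw [key] at hX hZ ⊢
    intro i
    exact rbij_ext A (P1 := ↥(LinearMap.ker (q i))) (P0 := (M i →₀ A)) ((LinearMap.ker (q i)).subtype) f g hf hg hk (hX i) (hZ i)
  · intro J X _ _ hX
    rw [key]
    intro i
    exact rbij_pi A (P1 := ↥(LinearMap.ker (q i))) (P0 := (M i →₀ A)) ((LinearMap.ker (q i)).subtype) J X (fun k => (key (X k)).mp (hX k) i)

end
end

section
/- Let A be a ring, B a preenveloping full subcategory of Mod-A that is closed under kernels and direct summands. Then B is reflective: for each module M there exists a morphism ψ_M : M → K with K in B such that every morphism from M to an object of B factors uniquely through ψ_M. -/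
open CategoryTheory Limits

/-- Let `B` (given by the predicate `P`) be a preenveloping full subcategory of `Mod-A`
which is closed under kernels and direct summands.  Then `B` is reflective: every module
`M` admits a morphism `ψ : M ⟶ K` with `K ∈ B` through which every morphism from `M` to
an object of `B` factors uniquely. -/
theorem statement12 {A : Type} [Ring A] (P : ModuleCat A → Prop)
    -- closed under isomorphisms
    (hiso : ∀ {X Y : ModuleCat A}, (X ≅ Y) → P X → P Y)
    -- closed under kernels
    (hker : ∀ {X Y : ModuleCat A} (f : X ⟶ Y), P X → P Y → P (kernel f))
    -- closed under direct summands
    (hsummand : ∀ {X Y : ModuleCat A} (r : X ⟶ Y) (s : Y ⟶ X), s ≫ r = 𝟙 Y → P X → P Y)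
    -- preenveloping
    (hpreenv : ∀ M : ModuleCat A, ∃ (L : ModuleCat A) (f : M ⟶ L), P L ∧
      ∀ (L' : ModuleCat A) (g : M ⟶ L'), P L' → ∃ h : L ⟶ L', f ≫ h = g) :
    ∀ M : ModuleCat A, ∃ (K : ModuleCat A) (ψ : M ⟶ K), P K ∧
      ∀ (L : ModuleCat A) (g : M ⟶ L), P L → ∃! h : K ⟶ L, ψ ≫ h = g := by
  intro M
  obtain ⟨L0, f, hL0, hf⟩ := hpreenv M
  obtain ⟨L1, g', hL1, hg'⟩ := hpreenv (cokernel f)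
  set g : L0 ⟶ L1 := cokernel.π f ≫ g' with hgdef
  have hfg : f ≫ g = 0 := by
    rw [hgdef, ← Category.assoc, cokernel.condition, zero_comp]
  set ψ : M ⟶ kernel g := kernel.lift g f hfg with hψdef
  refine ⟨kernel g, ψ, hker g hL0 hL1, ?_⟩
  -- key: any morphism from `kernel g` to an object of `B` killed by `ψ` is zero
  have key : ∀ (L' : ModuleCat A), P L' → ∀ d : kernel g ⟶ L', ψ ≫ d = 0 → d = 0 := by
    intro L' hL' d hd
    obtain ⟨s, hs⟩ := hf (kernel d) (kernel.lift d ψ hd) (hker d (hker g hL0 hL1) hL')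
    have he : f ≫ (s ≫ kernel.ι d ≫ kernel.ι g - 𝟙 L0) = 0 := by
      rw [Preadditive.comp_sub, Category.comp_id, ← Category.assoc, hs,
        ← Category.assoc, kernel.lift_ι, hψdef, kernel.lift_ι, sub_self]
    obtain ⟨w', hw'⟩ := hg' L0 (cokernel.desc f _ he) hL0
    have h1 : kernel.ι g ≫ (s ≫ kernel.ι d ≫ kernel.ι g - 𝟙 L0) = 0 := by
      rw [← cokernel.π_desc f _ he, ← hw', ← Category.assoc, ← Category.assoc]
      have hz : (kernel.ι g ≫ cokernel.π f) ≫ g' = 0 := by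
        rw [Category.assoc, ← hgdef, kernel.condition]
      rw [hz, zero_comp]
    have h2 : (kernel.ι g ≫ s ≫ kernel.ι d) ≫ kernel.ι g = 𝟙 (kernel g) ≫ kernel.ι g := by
      rw [Category.id_comp]
      have := sub_eq_zero.mp (by simpa [Preadditive.comp_sub] using h1)
      simpa using this
    have h3 : kernel.ι g ≫ s ≫ kernel.ι d = 𝟙 (kernel g) :=
      (cancel_mono (kernel.ι g)).mp h2
    calc d = (kernel.ι g ≫ s ≫ kernel.ι d) ≫ d := by rw [h3, Category.id_comp]
      _ = kernel.ι g ≫ s ≫ (kernel.ι d ≫ d) := by simp only [Category.assoc]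
      _ = 0 := by rw [kernel.condition]; simp
  intro L' g0 hL'
  obtain ⟨t, ht⟩ := hf L' g0 hL'
  refine ⟨kernel.ι g ≫ t, ?_, ?_⟩
  · show kernel.lift g f hfg ≫ (kernel.ι g ≫ t) = g0
    rw [← Category.assoc, kernel.lift_ι, ht]
  · intro h₂ hh₂
    have : ψ ≫ (h₂ - kernel.ι g ≫ t) = 0 := by
      rw [Preadditive.comp_sub, hh₂, hψdef, ← Category.assoc, kernel.lift_ι, ht, sub_self]
    have := key L' hL' _ this
    rwa [sub_eq_zero] at this
end

section
/- Let A be a ring, λ : A → B a ring epimorphism, and Σ a set of morphisms between projective right A-modules such that the essential image of restriction of scalars Mod-B → Mod-A equals X_Σ = {X : Hom_A(σ, X) is bijective for all σ ∈ Σ}. Then for any ring homomorphism μ : A → C, μ factors (uniquely) through λ if and only if σ ⊗_A C is an isomorphism for every σ ∈ Σ. -/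
/-- The scalar multiplication of a (not-instance) module structure `m`. -/
def moduleSMul {B X : Type} [Semiring B] [AddCommMonoid X] (m : Module B X) (b : B) (x : X) :
    X := by
  letI := m; exact b • x


open TensorProduct

/-- Conjugating by equivalences preserves bijectivity. -/
lemma bij_conj {α β γ δ : Type} (e₀ : α ≃ γ) (e₁ : β ≃ δ) (F : α → β) (G : γ → δ)
    (h : ∀ a, e₁ (F a) = G (e₀ a)) : Function.Bijective F ↔ Function.Bijective G := by
  have hG : G = e₁ ∘ F ∘ e₀.symm := by
    funext c
    show G c = e₁ (F (e₀.symm c))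
    rw [h, Equiv.apply_symm_apply]
  subst hG
  constructor
  · intro hF
    exact e₁.bijective.comp (hF.comp e₀.symm.bijective)
  · intro hG
    have := (e₁.symm.bijective.comp hG).comp e₀.bijective
    convert this using 1
    funext a; simp

lemma bij_of_precomp {R M N : Type} [CommRing R] [AddCommGroup M] [AddCommGroup N]
    [Module R M] [Module R N] (f : M →ₗ[R] N)
    (h1 : Function.Surjective (fun g : N →ₗ[R] M => g ∘ₗ f))
    (h2 : Function.Injective (fun g : N →ₗ[R] N => g ∘ₗ f)) :
    Function.Bijective f := by
  obtain ⟨g, hg⟩ := h1 LinearMap.id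
  simp only at hg
  have hfg : f ∘ₗ g = LinearMap.id := by
    apply h2
    simp only [LinearMap.comp_assoc, hg, LinearMap.comp_id, LinearMap.id_comp]
  constructor
  · intro x y hxy
    have := congrArg g hxy
    simpa using (LinearMap.congr_fun hg x).symm.trans
      ((congrArg g hxy).trans (LinearMap.congr_fun hg y))
  · intro y
    exact ⟨g y, LinearMap.congr_fun hfg y⟩

lemma precomp_equiv_bij {R M N Y : Type} [CommRing R] [AddCommGroup M] [AddCommGroup N]
    [AddCommGroup Y] [Module R M] [Module R N] [Module R Y] (f : M →ₗ[R] N)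
    (hf : Function.Bijective f) :
    Function.Bijective (fun g : N →ₗ[R] Y => g ∘ₗ f) := by
  let e := LinearEquiv.ofBijective f hf
  refine Function.bijective_iff_has_inverse.mpr
    ⟨fun g => g ∘ₗ (e.symm : N →ₗ[R] M), fun g => ?_, fun g => ?_⟩ <;>
  · ext x
    simp [e]

section baseChange

variable {A C : Type} [CommRing A] [CommRing C] [Algebra A C]
variable {P Q : Type} [AddCommGroup P] [Module A P] [AddCommGroup Q] [Module A Q]

lemma liftBaseChange_natural {Y : Type} [AddCommGroup Y] [Module A Y] [Module C Y]
    [IsScalarTower A C Y] (σ : P →ₗ[A] Q) (f : Q →ₗ[A] Y) :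
    LinearMap.liftBaseChange C (f ∘ₗ σ) = (LinearMap.liftBaseChange C f) ∘ₗ (σ.baseChange C) := by
  ext p
  simp

lemma precomp_bij_iff {Y : Type} [AddCommGroup Y] [Module A Y] [Module C Y]
    [IsScalarTower A C Y] (σ : P →ₗ[A] Q) :
    Function.Bijective (fun f : Q →ₗ[A] Y => f ∘ₗ σ) ↔
      Function.Bijective (fun g : C ⊗[A] Q →ₗ[C] Y => g ∘ₗ σ.baseChange C) := by
  refine bij_conj (LinearMap.liftBaseChangeEquiv C).toEquiv
    (LinearMap.liftBaseChangeEquiv C).toEquiv _ _ (fun f => ?_)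
  exact liftBaseChange_natural σ f

lemma rTensor_bij_iff (σ : P →ₗ[A] Q) :
    Function.Bijective (LinearMap.rTensor C σ) ↔ Function.Bijective (σ.baseChange C) := by
  refine bij_conj (TensorProduct.comm A P C).toEquiv (TensorProduct.comm A Q C).toEquiv _ _
    (fun x => ?_)
  induction x using TensorProduct.induction_on with
  | zero => simp
  | tmul p c => simp
  | add x y hx hy =>
    simp only [map_add, LinearEquiv.coe_toEquiv] at hx hy ⊢
    rw [hx, hy]

end baseChange

/-- Let `λ : A → B` be a ring epimorphism and `Σ = (σᵢ)` a family of morphisms between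
projective `A`-modules such that the essential image of restriction of scalars along `λ`
is exactly `X_Σ = {X : Hom_A(σᵢ, X) bijective for all i}`.  Then a ring homomorphism
`μ : A → C` factors (uniquely) through `λ` if and only if `σᵢ ⊗_A C` is an isomorphism
for every `i`. -/
theorem statement13 {A B : Type} [CommRing A] [CommRing B] (lam : A →+* B)
    {ι : Type} (P₁ P₀ : ι → Type)
    [∀ i, AddCommGroup (P₁ i)] [∀ i, Module A (P₁ i)]
    [∀ i, AddCommGroup (P₀ i)] [∀ i, Module A (P₀ i)]
    (hproj₁ : ∀ i, Module.Projective A (P₁ i)) (hproj₀ : ∀ i, Module.Projective A (P₀ i))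
    (σ : ∀ i, P₁ i →ₗ[A] P₀ i)
    (hepi : ∀ (C : Type) [Ring C] (f g : B →+* C), f.comp lam = g.comp lam → f = g)
    (himage : ∀ (X : Type) [AddCommGroup X] [Module A X],
      (∃ m : Module B X, ∀ (a : A) (x : X), moduleSMul m (lam a) x = a • x) ↔
        (∀ i, Function.Bijective (fun f : P₀ i →ₗ[A] X => f ∘ₗ σ i))) :
    ∀ (C : Type) [CommRing C] (μ : A →+* C),
      letI : Algebra A C := μ.toAlgebra
      ((∃! ν : B →+* C, ν.comp lam = μ) ↔
        ∀ i, Function.Bijective (LinearMap.rTensor C (σ i))) := by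
  intro C _ μ
  letI : Algebra A C := μ.toAlgebra
  constructor
  · -- existence of ν ⇒ all σᵢ ⊗ C iso
    rintro ⟨ν, hν, -⟩ i
    -- every module over C (compatibly over A) lies in X_Σ
    have hY : ∀ (Y : Type) [AddCommGroup Y] [Module A Y] [Module C Y] [IsScalarTower A C Y],
        ∀ j, Function.Bijective (fun f : P₀ j →ₗ[A] Y => f ∘ₗ σ j) := by
      intro Y _ _ _ _
      refine (himage Y).mp ⟨Module.compHom Y ν, fun a y => ?_⟩
      show ν (lam a) • y = a • y
      rw [← RingHom.comp_apply, hν]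
      exact algebraMap_smul C a y
    rw [rTensor_bij_iff]
    refine bij_of_precomp _ ?_ ?_
    · exact (((precomp_bij_iff (C := C) (σ i)).mp (hY (C ⊗[A] P₁ i) i))).surjective
    · exact (((precomp_bij_iff (C := C) (σ i)).mp (hY (C ⊗[A] P₀ i) i))).injective
  · intro hbij
    -- C itself lies in X_Σ
    have hC : ∀ i, Function.Bijective (fun f : P₀ i →ₗ[A] C => f ∘ₗ σ i) := by
      intro i
      rw [precomp_bij_iff (C := C) (σ i)]
      exact precomp_equiv_bij _ ((rTensor_bij_iff (σ i)).mp (hbij i))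
    obtain ⟨m, hm⟩ := (himage C).mpr hC
    -- key epi consequence: b ⊗ 1 = 1 ⊗ b in B ⊗[A] B
    letI : Algebra A B := lam.toAlgebra
    have key : ∀ b : B, (b ⊗ₜ[A] (1 : B) : B ⊗[A] B) = 1 ⊗ₜ[A] b := by
      have h := hepi (B ⊗[A] B) (Algebra.TensorProduct.includeLeft (S := A)).toRingHom
        (Algebra.TensorProduct.includeRight).toRingHom ?_
      · intro b
        exact RingHom.congr_fun h b
      · ext a
        show (lam a) ⊗ₜ[A] (1 : B) = (1 : B) ⊗ₜ[A] (lam a)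
        have : lam a = a • (1 : B) := by
          rw [Algebra.smul_def, mul_one]; rfl
        rw [this, TensorProduct.smul_tmul]
    -- the B-action on C is multiplication by the image of 1
    have hkey : ∀ (b : B) (x : C), moduleSMul m b x = moduleSMul m b 1 * x := by
      intro b x
      letI := m
      have hsmul : ∀ (b : B) (y : C), moduleSMul m b y = b • y := fun _ _ => rfl
      have hμ : ∀ (a : A) (c : C), a • c = μ a * c := fun a c => Algebra.smul_def a c
      have hA : ∀ (a : A) (b : B) (y : C), (a • b) • y = μ a * (b • y) := by
        intro a b y
        have h1 : a • b = lam a * b := Algebra.smul_def a b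
        rw [h1, mul_smul, ← hsmul, hm, hμ]
      let φ : B →ₗ[A] B →ₗ[A] C :=
        { toFun := fun b =>
            { toFun := fun b' => (b • (1 : C)) * (b' • x)
              map_add' := fun b₁ b₂ => by
                simp only [add_smul, mul_add]
              map_smul' := fun a b' => by
                simp only [RingHom.id_apply, hA, hμ]
                ring }
          map_add' := fun b₁ b₂ => by
            ext b'
            simp only [LinearMap.coe_mk, AddHom.coe_mk, LinearMap.add_apply, add_smul, add_mul]
          map_smul' := fun a b => by
            ext b'
            simp only [LinearMap.coe_mk, AddHom.coe_mk, RingHom.id_apply,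
              LinearMap.smul_apply, hA, hμ]
            ring }
      have h := congrArg (TensorProduct.lift φ) (key b)
      simp only [TensorProduct.lift.tmul, LinearMap.coe_mk, AddHom.coe_mk, one_smul,
        mul_one, φ] at h
      rw [hsmul, hsmul, h, one_mul]
    letI := m
    refine ⟨{ toFun := fun b => moduleSMul m b 1
              map_one' := one_smul B (1 : C)
              map_mul' := fun b b' => by
                show (b * b') • (1 : C) = b • (1 : C) * b' • (1 : C)
                rw [mul_smul]
                exact hkey b (b' • 1)
              map_zero' := zero_smul B (1 : C)
              map_add' := fun b b' => add_smul b b' (1 : C) }, ?_, ?_⟩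
    · ext a
      show moduleSMul m (lam a) 1 = μ a
      rw [hm, Algebra.smul_def, mul_one]
      rfl
    · intro ν' hν'
      refine hepi C ν' _ ?_
      ext a
      show ν' (lam a) = moduleSMul m (lam a) 1
      rw [hm, Algebra.smul_def, mul_one]
      exact RingHom.congr_fun hν' a
end

section
/- Let A be a commutative ring and P ⊆ Spec A a Thomason subset, i.e., a union of closed subsets V(I_λ) with each I_λ finitely generated. Then the collection G_P = { I ideal of A : V(I) ⊆ P } is a Gabriel filter: it is a filter of ideals closed under the operations (i) (I : x) ∈ G_P for all I ∈ G_P and x ∈ A, and (ii) if J is an ideal and there is I ∈ G_P with (J : x) ∈ G_P for all x ∈ I, then J ∈ G_P. -/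
/-- The set of ideals `G_P = { I : V(I) ⊆ P }` associated to a Thomason subset
`P ⊆ Spec A` is a Gabriel filter: it contains `⊤`, is closed under intersections and
enlargement, satisfies `(I : x) ∈ G_P` for `I ∈ G_P`, and satisfies the Gabriel
condition (ii). -/
theorem statement15 {A : Type} [CommRing A] (P : Set (PrimeSpectrum A))
    (hThomason : ∃ S : Set (Ideal A), (∀ I ∈ S, I.FG) ∧
      P = ⋃ I ∈ S, PrimeSpectrum.zeroLocus (I : Set A)) :
    -- G_P is nonempty (it contains the unit ideal)
    ((⊤ : Ideal A) ∈ {I : Ideal A | PrimeSpectrum.zeroLocus (I : Set A) ⊆ P}) ∧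
    -- closed under finite intersections
    (∀ I J : Ideal A, PrimeSpectrum.zeroLocus (I : Set A) ⊆ P →
      PrimeSpectrum.zeroLocus (J : Set A) ⊆ P →
      PrimeSpectrum.zeroLocus ((I ⊓ J : Ideal A) : Set A) ⊆ P) ∧
    -- closed under enlargement
    (∀ I J : Ideal A, PrimeSpectrum.zeroLocus (I : Set A) ⊆ P → I ≤ J →
      PrimeSpectrum.zeroLocus ((J : Ideal A) : Set A) ⊆ P) ∧
    -- Gabriel condition (i): (I : x) ∈ G_P for all I ∈ G_P, x ∈ A
    (∀ (I : Ideal A) (x : A), PrimeSpectrum.zeroLocus (I : Set A) ⊆ P →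
      PrimeSpectrum.zeroLocus ((I.colon (Ideal.span {x}) : Ideal A) : Set A) ⊆ P) ∧
    -- Gabriel condition (ii)
    (∀ I J : Ideal A, PrimeSpectrum.zeroLocus (I : Set A) ⊆ P →
      (∀ x ∈ I, PrimeSpectrum.zeroLocus ((J.colon (Ideal.span {x}) : Ideal A) : Set A) ⊆ P) →
      PrimeSpectrum.zeroLocus (J : Set A) ⊆ P) := by
  classical
  refine ⟨?_, ?_, ?_, ?_, ?_⟩
  · intro p hp
    exact absurd ((PrimeSpectrum.mem_zeroLocus _ _).mp hp Submodule.mem_top)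
      (p.isPrime.ne_top ∘ (Ideal.eq_top_iff_one _).mpr)
  · intro I J hI hJ
    rw [PrimeSpectrum.zeroLocus_inf]
    exact Set.union_subset hI hJ
  · intro I J hI hIJ
    exact (PrimeSpectrum.zeroLocus_anti_mono_ideal hIJ).trans hI
  · intro I x hI
    exact (PrimeSpectrum.zeroLocus_anti_mono_ideal
      (fun a ha => Ideal.mem_colon_span_singleton.mpr (I.mul_mem_right x ha))).trans hI
  · intro I J hI hcol p hp
    by_cases hIp : (I : Set A) ⊆ p.asIdeal
    · exact hI ((PrimeSpectrum.mem_zeroLocus _ _).mpr hIp)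
    · obtain ⟨x, hxI, hxp⟩ := Set.not_subset.mp hIp
      refine hcol x hxI ((PrimeSpectrum.mem_zeroLocus _ _).mpr fun a ha => ?_)
      have hax : a * x ∈ J := Ideal.mem_colon_span_singleton.mp ha
      have := (PrimeSpectrum.mem_zeroLocus _ _).mp hp hax
      exact (p.isPrime.mem_or_mem this).resolve_right hxp
end
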